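/- Let x be a real number with 0 ≤ x ≤ 1/2 and let n be a natural number. Then the finite product satisfies ∏_{i=1}^n (1 − x^i) ≥ (1 − x)(1 − x² − x³ − x⁴). -/

import Mathlib

/-!
Enlarging the index set only lowers the product, since every factor lies in `[0, 1]`; so it
suffices to bound `∏_{i=1}^{n+4} (1 - x^i)`. Keep the first four factors and bound the rest
from below by the Weierstrass product inequality `∏ (1 - a_i) ≥ 1 - ∑ a_i` together with the
geometric series `∑_{i ≥ 5} x^i ≤ x^5 / (1 - x)`. The resulting lower bound exceeds
`(1 - x)(1 - x² - x³ - x⁴)` by exactly `x^7 (1 - x^4 - x^5 + x^7)`, which is nonnegative for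
`0 ≤ x ≤ 1/2`.
-/

open Finset

theorem one_sub_sum_le_prod_one_sub {ι R : Type*} [CommRing R] [PartialOrder R] [IsOrderedRing R]
    (s : Finset ι) {f : ι → R} (hf0 : ∀ i ∈ s, 0 ≤ f i) (hf1 : ∀ i ∈ s, f i ≤ 1) :
    1 - ∑ i ∈ s, f i ≤ ∏ i ∈ s, (1 - f i) := by
  classical
  induction s using Finset.induction_on with
  | empty => simp
  | insert a s ha ih =>
    rw [sum_insert ha, prod_insert ha]
    have hs : 0 ≤ ∑ i ∈ s, f i := sum_nonneg fun i hi ↦ hf0 i (mem_insert_of_mem hi)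
    have ha0 := hf0 a (mem_insert_self a s)
    have ha1 : 0 ≤ 1 - f a := sub_nonneg.2 (hf1 a (mem_insert_self a s))
    have ih := ih (fun i hi ↦ hf0 i (mem_insert_of_mem hi)) (fun i hi ↦ hf1 i (mem_insert_of_mem hi))
    calc 1 - (f a + ∑ i ∈ s, f i)
        = (1 - f a) * (1 - ∑ i ∈ s, f i) - f a * ∑ i ∈ s, f i := by ring
      _ ≤ (1 - f a) * (1 - ∑ i ∈ s, f i) := sub_le_self _ (mul_nonneg ha0 hs)
      _ ≤ (1 - f a) * ∏ i ∈ s, (1 - f i) := mul_le_mul_of_nonneg_left ih ha1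

section Field

variable {K : Type*} [Field K] [LinearOrder K] [IsStrictOrderedRing K] {x : K}

theorem one_sub_div_le_prod_Ico_one_sub_pow (hx0 : 0 ≤ x) (hx1 : x < 1) (m n : ℕ) :
    1 - x ^ m / (1 - x) ≤ ∏ i ∈ Ico m n, (1 - x ^ i) :=
  (sub_le_sub_left (geom_sum_Ico_le_of_lt_one hx0 hx1) 1).trans <|
    one_sub_sum_le_prod_one_sub _ (fun i _ ↦ pow_nonneg hx0 i)
      (fun _ _ ↦ pow_le_one₀ hx0 hx1.le)

theorem le_prod_Ico_one_five_one_sub_pow_mul (hx0 : 0 ≤ x) (hx : x ≤ 1 / 2) :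
    (1 - x) * (1 - x ^ 2 - x ^ 3 - x ^ 4)
      ≤ (∏ i ∈ Ico 1 5, (1 - x ^ i)) * (1 - x ^ 5 / (1 - x)) := by
  have hx1 : x < 1 := hx.trans_lt (by norm_num)
  have h4 : x ^ 4 ≤ 1 / 16 :=
    calc x ^ 4 ≤ (1 / 2) ^ 4 := pow_le_pow_left₀ hx0 hx 4
      _ = 1 / 16 := by norm_num
  have h5 : x ^ 5 ≤ x ^ 4 := pow_le_pow_of_le_one hx0 hx1.le (by norm_num)
  have hdiff : (∏ i ∈ Ico 1 5, (1 - x ^ i)) * (1 - x ^ 5 / (1 - x))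
      = (1 - x) * (1 - x ^ 2 - x ^ 3 - x ^ 4) + x ^ 7 * (1 - x ^ 4 - x ^ 5 + x ^ 7) := by
    have hne : 1 - x ≠ 0 := sub_ne_zero.2 hx1.ne'
    simp only [prod_Ico_succ_top, Nat.reduceLeDiff, Ico_self, prod_empty]
    field_simp
    ring
  rw [hdiff]
  exact le_add_of_nonneg_right (mul_nonneg (pow_nonneg hx0 7) (by linarith [pow_nonneg hx0 7]))

end Field

/-- For a real number `x` with `0 ≤ x ≤ 1/2` and any `n : ℕ`,
`∏_{i=1}^n (1 - x^i) ≥ (1 - x)(1 - x² - x³ - x⁴)`. -/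
theorem prod_one_sub_pow_ge (x : ℝ) (hx0 : 0 ≤ x) (hx : x ≤ 1 / 2) (n : ℕ) :
    (1 - x) * (1 - x ^ 2 - x ^ 3 - x ^ 4) ≤ ∏ i ∈ Finset.Icc 1 n, (1 - x ^ i) := by
  have hx1 : x < 1 := by linarith
  have hf0 (i : ℕ) : 0 ≤ 1 - x ^ i := sub_nonneg.2 (pow_le_one₀ hx0 hx1.le)
  calc (1 - x) * (1 - x ^ 2 - x ^ 3 - x ^ 4)
      ≤ (∏ i ∈ Ico 1 5, (1 - x ^ i)) * (1 - x ^ 5 / (1 - x)) :=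
        le_prod_Ico_one_five_one_sub_pow_mul hx0 hx
    _ ≤ (∏ i ∈ Ico 1 5, (1 - x ^ i)) * ∏ i ∈ Ico 5 (n + 5), (1 - x ^ i) :=
      mul_le_mul_of_nonneg_left (one_sub_div_le_prod_Ico_one_sub_pow hx0 hx1 5 _)
        (prod_nonneg fun i _ ↦ hf0 i)
    _ = ∏ i ∈ Ico 1 (n + 5), (1 - x ^ i) := prod_Ico_consecutive _ (by norm_num) (by omega)
    _ ≤ ∏ i ∈ Icc 1 n, (1 - x ^ i) :=
      prod_le_prod_of_subset_of_le_one (fun i ↦ by simp only [mem_Icc, mem_Ico]; omega)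
        (fun i _ ↦ hf0 i) (fun i _ _ ↦ sub_le_self 1 (pow_nonneg hx0 i))
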